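/- Let D ⊆ (Fin 2 → ℝ) be a compact set and let q belong to the topological frontier of convexHull ℝ D. Then either q is an extreme point of convexHull ℝ D, or there exist v, w ∈ D with v ≠ q and w ≠ q such that q ∈ segment ℝ v w. -/

import Mathlib

/-!
A frontier point `q` of the compact convex set `K = conv D` has a supporting functional `f`.
The face `F` of `K` on which `f` is maximal is compact and convex, and since the plane is
two-dimensional some functional `g` is injective on the line `f = f q`, hence on `F`. Then `F` is
the segment between the minimiser and the maximiser of `g` on `F`; these are exposed points of
`F`, hence extreme points of `K`, hence points of `D`, and neither equals `q` unless `q` is itself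
extreme.
-/

open Set Module

section Caratheodory

variable {𝕜 E : Type*} [Field 𝕜] [LinearOrder 𝕜] [IsStrictOrderedRing 𝕜] [AddCommGroup E]
  [Module 𝕜 E] [FiniteDimensional 𝕜 E]

theorem exists_stdSimplex_sum_eq_of_mem_convexHull {s : Set E} {x : E}
    (hx : x ∈ convexHull 𝕜 s) :
    ∃ w ∈ stdSimplex 𝕜 (Fin (finrank 𝕜 E + 1)), ∃ z : Fin (finrank 𝕜 E + 1) → E,
      (∀ j, z j ∈ s) ∧ ∑ j, w j • z j = x := by
  obtain ⟨ι, _, z, w, hzs, hind, hw0, hw1, rfl⟩ := eq_pos_convex_span_of_mem_convexHull hx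
  -- Affine independence bounds `card ι`; the combination is then padded with zero weights.
  obtain ⟨e⟩ : Nonempty (ι ↪ Fin (finrank 𝕜 E + 1)) := by
    refine Function.Embedding.nonempty_of_card_le ?_
    simpa using hind.card_le_finrank_succ.trans (by gcongr; exact Submodule.finrank_le _)
  obtain ⟨i₀, -⟩ : (Finset.univ : Finset ι).Nonempty :=
    Finset.nonempty_of_sum_ne_zero (hw1 ▸ one_ne_zero)
  refine ⟨Function.extend e w 0, ⟨?_, ?_⟩, Function.extend e z fun _ => z i₀, ?_, ?_⟩
  · have : range (Function.extend e w 0) ⊆ Ici 0 := (range_extend_subset _ _ _).trans <|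
      union_subset (range_subset_iff.2 fun i => (hw0 i).le) (image_subset_iff.2 fun _ _ => le_rfl)
    exact fun j => this (mem_range_self j)
  · refine (Fintype.sum_of_injective e e.injective _ _ (fun j hj => ?_) fun i => ?_).symm.trans hw1
    · exact Function.extend_apply' _ _ _ (by simpa using hj)
    · exact (e.injective.extend_apply _ _ _).symm
  · have : range (Function.extend e z fun _ => z i₀) ⊆ s := (range_extend_subset _ _ _).trans <|
      union_subset hzs (image_subset_iff.2 fun _ _ => hzs (mem_range_self i₀))
    exact fun j => this (mem_range_self j)
  · refine (Fintype.sum_of_injective e e.injective _ _ (fun j hj => ?_) fun i => ?_).symm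
    · rw [Function.extend_apply' _ _ _ (by simpa using hj), Pi.zero_apply, zero_smul]
    · rw [e.injective.extend_apply, e.injective.extend_apply]

end Caratheodory

section Segment

variable {E : Type*} [AddCommGroup E] [Module ℝ E] [TopologicalSpace E] {A : Set E}
  {g : StrongDual ℝ E} {a b : E}

theorem mem_exposedPoints_of_isMaxOn_of_injOn (hg : InjOn g A) (ha : a ∈ A)
    (hmax : IsMaxOn g A a) : a ∈ A.exposedPoints ℝ :=
  ⟨ha, g, fun _ hy => ⟨hmax hy, fun h => hg hy ha (le_antisymm (hmax hy) h)⟩⟩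

theorem mem_exposedPoints_of_isMinOn_of_injOn (hg : InjOn g A) (ha : a ∈ A)
    (hmin : IsMinOn g A a) : a ∈ A.exposedPoints ℝ :=
  mem_exposedPoints_of_isMaxOn_of_injOn (g := -g) (fun _ hx _ hy h => hg hx hy (neg_inj.1 h)) ha
    (isMaxOn_iff.2 fun _ hy => by simpa using hmin hy)

theorem Convex.subset_segment_of_injOn (hA : Convex ℝ A) (hg : InjOn g A) (ha : a ∈ A)
    (hb : b ∈ A) (hmin : IsMinOn g A a) (hmax : IsMaxOn g A b) : A ⊆ segment ℝ a b := by
  intro x hx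
  have hgx : g x ∈ (g : E →ₗ[ℝ] ℝ).toAffineMap '' segment ℝ a b := by
    rw [image_segment ℝ, segment_eq_Icc (hmin hb)]
    exact ⟨hmin hx, hmax hx⟩
  obtain ⟨p, hp, hpx⟩ := hgx
  rwa [hg (hA.segment_subset ha hb hp) hx hpx] at hp

theorem IsCompact.exists_subset_segment_exposedPoints (hK : IsCompact A) (hA : Convex ℝ A)
    (hg : InjOn g A) (hne : A.Nonempty) :
    ∃ a ∈ A.exposedPoints ℝ, ∃ b ∈ A.exposedPoints ℝ, A ⊆ segment ℝ a b := by
  obtain ⟨a, ha, hmin⟩ := hK.exists_isMinOn hne g.continuous.continuousOn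
  obtain ⟨b, hb, hmax⟩ := hK.exists_isMaxOn hne g.continuous.continuousOn
  exact ⟨a, mem_exposedPoints_of_isMinOn_of_injOn hg ha hmin,
    b, mem_exposedPoints_of_isMaxOn_of_injOn hg hb hmax,
    hA.subset_segment_of_injOn hg ha hb hmin hmax⟩

end Segment

section FiniteDimensional

variable {E : Type*} [NormedAddCommGroup E] [NormedSpace ℝ E] [FiniteDimensional ℝ E]

theorem IsCompact.convexHull {s : Set E} (hs : IsCompact s) :
    IsCompact (_root_.convexHull ℝ s) := by
  let n := finrank ℝ E + 1
  have hull_eq : _root_.convexHull ℝ s =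
      (fun p : (Fin n → ℝ) × (Fin n → E) => ∑ j, p.1 j • p.2 j) ''
        (stdSimplex ℝ (Fin n) ×ˢ univ.pi fun _ => s) := by
    refine Subset.antisymm (fun x hx => ?_) ?_
    · obtain ⟨w, hw, z, hz, rfl⟩ := exists_stdSimplex_sum_eq_of_mem_convexHull hx
      exact ⟨(w, z), ⟨hw, fun j _ => hz j⟩, rfl⟩
    · rintro _ ⟨⟨w, z⟩, ⟨hw, hz⟩, rfl⟩
      exact (convex_convexHull ℝ s).sum_mem (fun j _ => hw.1 j) hw.2
        fun j _ => subset_convexHull ℝ s (hz j (mem_univ j))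
  rw [hull_eq]
  exact ((isCompact_stdSimplex ℝ (Fin n)).prod (isCompact_univ_pi fun _ => hs)).image
    (by fun_prop)

theorem Convex.exists_forall_le_of_notMem_interior {A : Set E} {x : E} (hA : Convex ℝ A)
    (hxA : x ∈ A) (hx : x ∉ interior A) :
    ∃ f : StrongDual ℝ E, f ≠ 0 ∧ ∀ a ∈ A, f a ≤ f x := by
  by_cases hint : (interior A).Nonempty
  · exact geometric_hahn_banach_of_nonempty_interior_point hA hx hint
  have hdir : (affineSpan ℝ A).direction < ⊤ := by
    rw [lt_top_iff_ne_top, Ne, AffineSubspace.direction_eq_top_iff_of_nonempty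
      ⟨x, subset_affineSpan ℝ A hxA⟩, ← hA.interior_nonempty_iff_affineSpan_eq_top]
    exact hint
  obtain ⟨f, hf0, hf⟩ := Submodule.exists_dual_map_eq_bot_of_lt_top hdir inferInstance
  refine ⟨LinearMap.toContinuousLinearMap f, by simpa using hf0, fun a ha => le_of_eq ?_⟩
  have hax : f (a -ᵥ x) ∈ (affineSpan ℝ A).direction.map f := Submodule.mem_map_of_mem <|
    AffineSubspace.vsub_mem_direction (subset_affineSpan ℝ A ha) (subset_affineSpan ℝ A hxA)
  rw [hf, Submodule.mem_bot, vsub_eq_sub, map_sub, sub_eq_zero] at hax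
  exact hax

theorem exists_injective_prod_of_finrank_eq_two (hE : finrank ℝ E = 2) {f : StrongDual ℝ E}
    (hf : f ≠ 0) : ∃ g : StrongDual ℝ E, Function.Injective (f.prod g) := by
  have hker : finrank ℝ (LinearMap.ker (f : E →ₗ[ℝ] ℝ)) = 1 := by
    have hf' : (f : E →ₗ[ℝ] ℝ) ≠ 0 := by
      rwa [Ne, ← ContinuousLinearMap.toLinearMap_zero, ContinuousLinearMap.coe_inj]
    have := Dual.finrank_ker_add_one_of_ne_zero hf'
    omega
  obtain ⟨v, hv0, hv⟩ := finrank_eq_one_iff'.1 hker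
  obtain ⟨g, -, hgv⟩ := exists_dual_vector ℝ (v : E) (by simpa using hv0)
  refine ⟨g, (injective_iff_map_eq_zero _).2 fun x hx => ?_⟩
  obtain ⟨c, hc⟩ := hv ⟨x, congrArg Prod.fst hx⟩
  obtain rfl : c • (v : E) = x := congrArg Subtype.val hc
  have hgx : c * ‖(v : E)‖ = 0 := by simpa [hgv] using congrArg Prod.snd hx
  have hv0' : ‖(v : E)‖ ≠ 0 := by simpa using hv0
  simp [(mul_eq_zero.1 hgx).resolve_right hv0']

end FiniteDimensional

theorem stmt12 (D : Set (Fin 2 → ℝ)) (hD : IsCompact D) (q : Fin 2 → ℝ)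
    (hq : q ∈ frontier (convexHull ℝ D)) :
    q ∈ Set.extremePoints ℝ (convexHull ℝ D) ∨
      ∃ v ∈ D, ∃ w ∈ D, v ≠ q ∧ w ≠ q ∧ q ∈ segment ℝ v w := by
  by_cases hext : q ∈ (convexHull ℝ D).extremePoints ℝ
  · exact Or.inl hext
  right
  have hK : IsCompact (convexHull ℝ D) := hD.convexHull
  have hqK : q ∈ convexHull ℝ D := hK.isClosed.frontier_subset hq
  obtain ⟨f, hf0, hfq⟩ := (convex_convexHull ℝ D).exists_forall_le_of_notMem_interior hqK hq.2
  obtain ⟨g, hg⟩ := exists_injective_prod_of_finrank_eq_two (by simp) hf0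
  set F := f.toExposed (convexHull ℝ D)
  have hF : IsExposed ℝ (convexHull ℝ D) F := ContinuousLinearMap.toExposed.isExposed
  have hqF : q ∈ F := ⟨hqK, hfq⟩
  have hgF : InjOn g F := fun x hx y hy hxy =>
    hg (Prod.ext (le_antisymm (hy.2 x hx.1) (hx.2 y hy.1)) hxy)
  obtain ⟨a, ha, b, hb, hFab⟩ := (hF.isCompact hK).exists_subset_segment_exposedPoints
    (hF.convex (convex_convexHull ℝ D)) hgF ⟨q, hqF⟩
  have hFext : F.exposedPoints ℝ ⊆ (convexHull ℝ D).extremePoints ℝ := fun x hx =>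
    hF.isExtreme.extremePoints_subset_extremePoints (exposedPoints_subset_extremePoints hx)
  refine ⟨a, extremePoints_convexHull_subset (hFext ha),
    b, extremePoints_convexHull_subset (hFext hb), ?_, ?_, hFab hqF⟩
  · rintro rfl
    exact hext (hFext ha)
  · rintro rfl
    exact hext (hFext hb)
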